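/- Let ρ̃, ρ : [0,1] × ℝⁿ → (0,∞) be smooth strictly positive probability densities and ṽ, v smooth vector fields satisfying the continuity equations ∂ρ̃/∂t + ∇·(ṽρ̃) = 0 and ∂ρ/∂t + ∇·(vρ) = 0, with t ↦ D(ρ̃_t‖ρ_t) differentiable via differentiation under the integral sign, vanishing boundary terms (∫∇·((1 + log(ρ̃_t/ρ_t)) ṽ_t ρ̃_t) dx = 0 and ∫∇·((ρ̃_t/ρ_t) v_t ρ_t) dx = 0 for each t), and all integrals below finite. Then the action J(ρ̃,ρ,ṽ,v) = (1/2)∫₀¹∫_{ℝⁿ} [ ‖ṽ‖²ρ̃ + ‖v‖²ρ + ‖∇log(ρ̃_t/ρ_t)‖²ρ̃ + ‖∇(ρ̃_t/ρ_t)‖²ρ ] dx dt + D(ρ̃₁‖ρ₁) satisfies the exact identity J(ρ̃,ρ,ṽ,v) = D(ρ̃₀‖ρ₀) + (1/2)∫₀¹∫_{ℝⁿ} [ ‖ṽ + ∇log(ρ̃_t/ρ_t)‖² ρ̃ + ‖v − ∇(ρ̃_t/ρ_t)‖² ρ ] dx dt. -/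

import Mathlib

open MeasureTheory Real RealInnerProductSpace intervalIntegral

/-- Divergence of a vector field on `ℝⁿ`: `(∇·w)(x) = ∑ᵢ ∂wⁱ/∂xⁱ (x)`. -/
noncomputable def vdiv {n : ℕ} (w : EuclideanSpace ℝ (Fin n) → EuclideanSpace ℝ (Fin n))
    (x : EuclideanSpace ℝ (Fin n)) : ℝ :=
  ∑ i, fderiv ℝ w x (EuclideanSpace.single i 1) i

lemma euclid_sum_single {n : ℕ} (u : EuclideanSpace ℝ (Fin n)) :
    ∑ i, u i • EuclideanSpace.single i (1 : ℝ) = u := by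
  ext j
  rw [WithLp.ofLp_sum, Finset.sum_apply]
  simp [EuclideanSpace.single_apply, PiLp.smul_apply]

lemma inner_gradient_eq {n : ℕ} (f : EuclideanSpace ℝ (Fin n) → ℝ)
    (x u : EuclideanSpace ℝ (Fin n)) :
    ⟪gradient f x, u⟫ = fderiv ℝ f x u := by
  simp [gradient, InnerProductSpace.toDual_symm_apply]

lemma gradient_one_add {n : ℕ} (f : EuclideanSpace ℝ (Fin n) → ℝ)
    (x : EuclideanSpace ℝ (Fin n)) :
    gradient (fun y => 1 + f y) x = gradient f x := by
  simp [gradient, fderiv_const_add]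

lemma continuous_gradient {n : ℕ} {f : EuclideanSpace ℝ (Fin n) → ℝ}
    (hf : ContDiff ℝ (⊤ : ℕ∞) f) : Continuous (fun x => gradient f x) := by
  exact ((InnerProductSpace.toDual ℝ _).symm.continuous).comp (hf.continuous_fderiv (by simp))

lemma vdiv_smul {n : ℕ} (f : EuclideanSpace ℝ (Fin n) → ℝ)
    (w : EuclideanSpace ℝ (Fin n) → EuclideanSpace ℝ (Fin n)) (x : EuclideanSpace ℝ (Fin n))
    (hf : DifferentiableAt ℝ f x) (hw : DifferentiableAt ℝ w x) :
    vdiv (fun y => f y • w y) x = ⟪gradient f x, w x⟫ + f x * vdiv w x := by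
  unfold vdiv
  rw [fderiv_fun_smul hf hw]
  simp only [ContinuousLinearMap.add_apply, ContinuousLinearMap.smul_apply,
    ContinuousLinearMap.smulRight_apply, PiLp.add_apply, PiLp.smul_apply, smul_eq_mul]
  rw [Finset.sum_add_distrib, ← Finset.mul_sum]
  have : ⟪gradient f x, w x⟫ = ∑ i, fderiv ℝ f x (EuclideanSpace.single i 1) * (w x) i := by
    rw [inner_gradient_eq]
    conv_lhs => rw [← euclid_sum_single (w x)]
    rw [map_sum]
    simp [mul_comm]
  rw [this]
  ring

/-- Let `(ρt, vt)` and `(ρ, v)` be two smooth strictly positive flows of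
probability densities on `[0,1]`, each satisfying its continuity equation.  Under
differentiation under the integral sign, vanishing boundary terms, and finiteness of all
the integrals involved, the two-velocity action
`J = (1/2)∫₀¹∫ [‖vt‖²ρt + ‖v‖²ρ + ‖∇log(ρt/ρ)‖²ρt + ‖∇(ρt/ρ)‖²ρ] dx dt + D(ρt₁‖ρ₁)`
satisfies the exact identity
`J = D(ρt₀‖ρ₀) + (1/2)∫₀¹∫ [‖vt + ∇log(ρt/ρ)‖²ρt + ‖v − ∇(ρt/ρ)‖²ρ] dx dt`. -/
theorem product_wasserstein_action_identity {n : ℕ}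
    (ρt ρ : ℝ → EuclideanSpace ℝ (Fin n) → ℝ)
    (hρts : ContDiff ℝ (⊤ : ℕ∞) (fun p : ℝ × EuclideanSpace ℝ (Fin n) => ρt p.1 p.2))
    (hρs : ContDiff ℝ (⊤ : ℕ∞) (fun p : ℝ × EuclideanSpace ℝ (Fin n) => ρ p.1 p.2))
    (hρtpos : ∀ t x, 0 < ρt t x) (hρpos : ∀ t x, 0 < ρ t x)
    (hρt1 : ∀ t, ∫ x, ρt t x = 1) (hρ1 : ∀ t, ∫ x, ρ t x = 1)
    (vt v : ℝ → EuclideanSpace ℝ (Fin n) → EuclideanSpace ℝ (Fin n))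
    (hvts : ContDiff ℝ (⊤ : ℕ∞) (fun p : ℝ × EuclideanSpace ℝ (Fin n) => vt p.1 p.2))
    (hvs : ContDiff ℝ (⊤ : ℕ∞) (fun p : ℝ × EuclideanSpace ℝ (Fin n) => v p.1 p.2))
    (hcet : ∀ t ∈ Set.Icc (0 : ℝ) 1, ∀ x,
      deriv (fun s => ρt s x) t + vdiv (fun y => ρt t y • vt t y) x = 0)
    (hce : ∀ t ∈ Set.Icc (0 : ℝ) 1, ∀ x,
      deriv (fun s => ρ s x) t + vdiv (fun y => ρ t y • v t y) x = 0)
    (hDUI : ∀ t ∈ Set.Icc (0 : ℝ) 1,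
      HasDerivAt (fun s => ∫ x, ρt s x * Real.log (ρt s x / ρ s x))
        (∫ x, (deriv (fun s => ρt s x) t * (1 + Real.log (ρt t x / ρ t x))
          - deriv (fun s => ρ s x) t * (ρt t x / ρ t x))) t)
    (hbdry₁ : ∀ t ∈ Set.Icc (0 : ℝ) 1,
      (Integrable (fun x =>
          vdiv (fun y => (1 + Real.log (ρt t y / ρ t y)) • (ρt t y • vt t y)) x))
        ∧ ∫ x, vdiv (fun y => (1 + Real.log (ρt t y / ρ t y)) • (ρt t y • vt t y)) x = 0)
    (hbdry₂ : ∀ t ∈ Set.Icc (0 : ℝ) 1,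
      (Integrable (fun x => vdiv (fun y => (ρt t y / ρ t y) • (ρ t y • v t y)) x))
        ∧ ∫ x, vdiv (fun y => (ρt t y / ρ t y) • (ρ t y • v t y)) x = 0)
    (hfin₁ : ∀ t ∈ Set.Icc (0 : ℝ) 1,
      Integrable (fun x => ‖vt t x‖ ^ 2 * ρt t x)
        ∧ Integrable (fun x => ‖v t x‖ ^ 2 * ρ t x)
        ∧ Integrable (fun x =>
            ‖gradient (fun y => Real.log (ρt t y / ρ t y)) x‖ ^ 2 * ρt t x)
        ∧ Integrable (fun x => ‖gradient (fun y => ρt t y / ρ t y) x‖ ^ 2 * ρ t x))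
    (hfin₂ : IntervalIntegrable (fun t => ∫ x,
        (‖vt t x‖ ^ 2 * ρt t x + ‖v t x‖ ^ 2 * ρ t x
          + ‖gradient (fun y => Real.log (ρt t y / ρ t y)) x‖ ^ 2 * ρt t x
          + ‖gradient (fun y => ρt t y / ρ t y) x‖ ^ 2 * ρ t x))
      MeasureTheory.volume 0 1)
    (hfin₃ : IntervalIntegrable (fun t => ∫ x,
        (‖vt t x + gradient (fun y => Real.log (ρt t y / ρ t y)) x‖ ^ 2 * ρt t x
          + ‖v t x - gradient (fun y => ρt t y / ρ t y) x‖ ^ 2 * ρ t x))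
      MeasureTheory.volume 0 1) :
    (1 / 2) * (∫ t in (0 : ℝ)..1, ∫ x,
        (‖vt t x‖ ^ 2 * ρt t x + ‖v t x‖ ^ 2 * ρ t x
          + ‖gradient (fun y => Real.log (ρt t y / ρ t y)) x‖ ^ 2 * ρt t x
          + ‖gradient (fun y => ρt t y / ρ t y) x‖ ^ 2 * ρ t x))
      + (∫ x, ρt 1 x * Real.log (ρt 1 x / ρ 1 x))
      = (∫ x, ρt 0 x * Real.log (ρt 0 x / ρ 0 x))
        + (1 / 2) * ∫ t in (0 : ℝ)..1, ∫ x,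
            (‖vt t x + gradient (fun y => Real.log (ρt t y / ρ t y)) x‖ ^ 2 * ρt t x
              + ‖v t x - gradient (fun y => ρt t y / ρ t y) x‖ ^ 2 * ρ t x) := by
  have hρt_y : ∀ t, ContDiff ℝ (⊤ : ℕ∞) (fun y => ρt t y) :=
    fun t => hρts.comp (contDiff_const.prodMk contDiff_id)
  have hρ_y : ∀ t, ContDiff ℝ (⊤ : ℕ∞) (fun y => ρ t y) :=
    fun t => hρs.comp (contDiff_const.prodMk contDiff_id)
  have hvt_y : ∀ t, ContDiff ℝ (⊤ : ℕ∞) (fun y => vt t y) :=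
    fun t => hvts.comp (contDiff_const.prodMk contDiff_id)
  have hv_y : ∀ t, ContDiff ℝ (⊤ : ℕ∞) (fun y => v t y) :=
    fun t => hvs.comp (contDiff_const.prodMk contDiff_id)
  have hratio : ∀ t, ContDiff ℝ (⊤ : ℕ∞) (fun y => ρt t y / ρ t y) :=
    fun t => (hρt_y t).div (hρ_y t) (fun y => (hρpos t y).ne')
  have hlog : ∀ t, ContDiff ℝ (⊤ : ℕ∞) (fun y => Real.log (ρt t y / ρ t y)) :=
    fun t => (hratio t).log (fun y => (div_pos (hρtpos t y) (hρpos t y)).ne')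
  -- key identity at each time t
  have key : ∀ t ∈ Set.Icc (0:ℝ) 1,
      (∫ x, (‖vt t x + gradient (fun y => Real.log (ρt t y / ρ t y)) x‖ ^ 2 * ρt t x
          + ‖v t x - gradient (fun y => ρt t y / ρ t y) x‖ ^ 2 * ρ t x))
      = (∫ x, (‖vt t x‖ ^ 2 * ρt t x + ‖v t x‖ ^ 2 * ρ t x
          + ‖gradient (fun y => Real.log (ρt t y / ρ t y)) x‖ ^ 2 * ρt t x
          + ‖gradient (fun y => ρt t y / ρ t y) x‖ ^ 2 * ρ t x))
        + 2 * (∫ x, (deriv (fun s => ρt s x) t * (1 + Real.log (ρt t x / ρ t x))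
          - deriv (fun s => ρ s x) t * (ρt t x / ρ t x))) := by
    intro t ht
    set G₁ := gradient (fun y => Real.log (ρt t y / ρ t y)) with hG₁
    set G₂ := gradient (fun y => ρt t y / ρ t y) with hG₂
    have hgc : Continuous G₁ := continuous_gradient (hlog t)
    have hhc : Continuous G₂ := continuous_gradient (hratio t)
    have hρtc : Continuous (fun x => ρt t x) := (hρt_y t).continuous
    have hρc : Continuous (fun x => ρ t x) := (hρ_y t).continuous
    have hvtc : Continuous (fun x => vt t x) := (hvt_y t).continuous
    have hvc : Continuous (fun x => v t x) := (hv_y t).continuous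
    obtain ⟨i1, i2, i3, i4⟩ := hfin₁ t ht
    have ic1 : Integrable (fun x => ρt t x * ⟪G₁ x, vt t x⟫) := by
      refine Integrable.mono' ((i3.add i1).const_mul (1/2)) ?_ ?_
      · exact (hρtc.mul (hgc.inner hvtc)).aestronglyMeasurable
      · filter_upwards with x
        have h1 := abs_real_inner_le_norm (G₁ x) (vt t x)
        have h2 : (0:ℝ) ≤ ρt t x := (hρtpos t x).le
        have h3 := two_mul_le_add_sq ‖G₁ x‖ ‖vt t x‖
        rw [Real.norm_eq_abs, abs_mul, abs_of_nonneg h2]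
        simp only [Pi.add_apply]
        nlinarith [abs_nonneg (⟪G₁ x, vt t x⟫)]
    have ic2 : Integrable (fun x => ρ t x * ⟪G₂ x, v t x⟫) := by
      refine Integrable.mono' ((i4.add i2).const_mul (1/2)) ?_ ?_
      · exact (hρc.mul (hhc.inner hvc)).aestronglyMeasurable
      · filter_upwards with x
        have h1 := abs_real_inner_le_norm (G₂ x) (v t x)
        have h2 : (0:ℝ) ≤ ρ t x := (hρpos t x).le
        have h3 := two_mul_le_add_sq ‖G₂ x‖ ‖v t x‖
        rw [Real.norm_eq_abs, abs_mul, abs_of_nonneg h2]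
        simp only [Pi.add_apply]
        nlinarith [abs_nonneg (⟪G₂ x, v t x⟫)]
    have hdf1 : ∀ x, DifferentiableAt ℝ (fun y => 1 + Real.log (ρt t y / ρ t y)) x :=
      fun x => ((contDiff_const.add (hlog t)).differentiable (by simp)) x
    have hdw1 : ∀ x, DifferentiableAt ℝ (fun y => ρt t y • vt t y) x :=
      fun x => (((hρt_y t).smul (hvt_y t)).differentiable (by simp)) x
    have hdf2 : ∀ x, DifferentiableAt ℝ (fun y => ρt t y / ρ t y) x :=
      fun x => ((hratio t).differentiable (by simp)) x
    have hdw2 : ∀ x, DifferentiableAt ℝ (fun y => ρ t y • v t y) x :=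
      fun x => (((hρ_y t).smul (hv_y t)).differentiable (by simp)) x
    have hpt : ∀ x,
        deriv (fun s => ρt s x) t * (1 + Real.log (ρt t x / ρ t x))
          - deriv (fun s => ρ s x) t * (ρt t x / ρ t x)
        = (ρt t x * ⟪G₁ x, vt t x⟫ - ρ t x * ⟪G₂ x, v t x⟫)
          - vdiv (fun y => (1 + Real.log (ρt t y / ρ t y)) • (ρt t y • vt t y)) x
          + vdiv (fun y => (ρt t y / ρ t y) • (ρ t y • v t y)) x := by
      intro x
      have e1 : deriv (fun s => ρt s x) t = - vdiv (fun y => ρt t y • vt t y) x := by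
        have := hcet t ht x; linarith
      have e2 : deriv (fun s => ρ s x) t = - vdiv (fun y => ρ t y • v t y) x := by
        have := hce t ht x; linarith
      have p1 := vdiv_smul (fun y => 1 + Real.log (ρt t y / ρ t y))
        (fun y => ρt t y • vt t y) x (hdf1 x) (hdw1 x)
      have p2 := vdiv_smul (fun y => ρt t y / ρ t y)
        (fun y => ρ t y • v t y) x (hdf2 x) (hdw2 x)
      rw [gradient_one_add] at p1
      simp only [real_inner_smul_right, ← hG₁, ← hG₂] at p1 p2
      rw [e1, e2]
      linear_combination p1 - p2
    have ic12 : Integrable (fun x => ρt t x * ⟪G₁ x, vt t x⟫ - ρ t x * ⟪G₂ x, v t x⟫) :=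
      ic1.sub ic2
    obtain ⟨ib1, hb1⟩ := hbdry₁ t ht
    obtain ⟨ib2, hb2⟩ := hbdry₂ t ht
    have hDint : (∫ x, (deriv (fun s => ρt s x) t * (1 + Real.log (ρt t x / ρ t x))
          - deriv (fun s => ρ s x) t * (ρt t x / ρ t x)))
        = (∫ x, ρt t x * ⟪G₁ x, vt t x⟫) - ∫ x, ρ t x * ⟪G₂ x, v t x⟫ := by
      calc (∫ x, (deriv (fun s => ρt s x) t * (1 + Real.log (ρt t x / ρ t x))
          - deriv (fun s => ρ s x) t * (ρt t x / ρ t x)))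
          = ∫ x, ((ρt t x * ⟪G₁ x, vt t x⟫ - ρ t x * ⟪G₂ x, v t x⟫)
            - vdiv (fun y => (1 + Real.log (ρt t y / ρ t y)) • (ρt t y • vt t y)) x
            + vdiv (fun y => (ρt t y / ρ t y) • (ρ t y • v t y)) x) :=
            integral_congr_ae (Filter.Eventually.of_forall hpt)
        _ = (∫ x, ((ρt t x * ⟪G₁ x, vt t x⟫ - ρ t x * ⟪G₂ x, v t x⟫)
            - vdiv (fun y => (1 + Real.log (ρt t y / ρ t y)) • (ρt t y • vt t y)) x))
            + ∫ x, vdiv (fun y => (ρt t y / ρ t y) • (ρ t y • v t y)) x :=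
            MeasureTheory.integral_add (ic12.sub ib1) ib2
        _ = ((∫ x, (ρt t x * ⟪G₁ x, vt t x⟫ - ρ t x * ⟪G₂ x, v t x⟫))
            - ∫ x, vdiv (fun y => (1 + Real.log (ρt t y / ρ t y)) • (ρt t y • vt t y)) x)
            + ∫ x, vdiv (fun y => (ρt t y / ρ t y) • (ρ t y • v t y)) x := by
            rw [MeasureTheory.integral_sub ic12 ib1]
        _ = (∫ x, ρt t x * ⟪G₁ x, vt t x⟫) - ∫ x, ρ t x * ⟪G₂ x, v t x⟫ := by
            rw [MeasureTheory.integral_sub ic1 ic2, hb1, hb2]; ring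
    have hptB : ∀ x, ‖vt t x + G₁ x‖ ^ 2 * ρt t x + ‖v t x - G₂ x‖ ^ 2 * ρ t x
        = (‖vt t x‖ ^ 2 * ρt t x + ‖v t x‖ ^ 2 * ρ t x
            + ‖G₁ x‖ ^ 2 * ρt t x + ‖G₂ x‖ ^ 2 * ρ t x)
          + 2 * (ρt t x * ⟪G₁ x, vt t x⟫ - ρ t x * ⟪G₂ x, v t x⟫) := by
      intro x
      rw [norm_add_sq_real, norm_sub_sq_real, real_inner_comm (vt t x) (G₁ x),
        real_inner_comm (v t x) (G₂ x)]
      ring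
    calc (∫ x, (‖vt t x + G₁ x‖ ^ 2 * ρt t x + ‖v t x - G₂ x‖ ^ 2 * ρ t x))
        = ∫ x, ((‖vt t x‖ ^ 2 * ρt t x + ‖v t x‖ ^ 2 * ρ t x
            + ‖G₁ x‖ ^ 2 * ρt t x + ‖G₂ x‖ ^ 2 * ρ t x)
          + 2 * (ρt t x * ⟪G₁ x, vt t x⟫ - ρ t x * ⟪G₂ x, v t x⟫)) :=
          integral_congr_ae (Filter.Eventually.of_forall hptB)
      _ = (∫ x, (‖vt t x‖ ^ 2 * ρt t x + ‖v t x‖ ^ 2 * ρ t x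
            + ‖G₁ x‖ ^ 2 * ρt t x + ‖G₂ x‖ ^ 2 * ρ t x))
          + ∫ x, 2 * (ρt t x * ⟪G₁ x, vt t x⟫ - ρ t x * ⟪G₂ x, v t x⟫) :=
          MeasureTheory.integral_add (((i1.add i2).add i3).add i4) (ic12.const_mul 2)
      _ = (∫ x, (‖vt t x‖ ^ 2 * ρt t x + ‖v t x‖ ^ 2 * ρ t x
            + ‖G₁ x‖ ^ 2 * ρt t x + ‖G₂ x‖ ^ 2 * ρ t x))
          + 2 * (∫ x, (deriv (fun s => ρt s x) t * (1 + Real.log (ρt t x / ρ t x))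
            - deriv (fun s => ρ s x) t * (ρt t x / ρ t x))) := by
          rw [MeasureTheory.integral_const_mul, MeasureTheory.integral_sub ic1 ic2, hDint]
  -- Fundamental theorem of calculus
  have hIcc : Set.uIcc (0:ℝ) 1 = Set.Icc (0:ℝ) 1 := Set.uIcc_of_le zero_le_one
  have hFTC : (∫ t in (0:ℝ)..1, ∫ x,
        (deriv (fun s => ρt s x) t * (1 + Real.log (ρt t x / ρ t x))
          - deriv (fun s => ρ s x) t * (ρt t x / ρ t x)))
      = (∫ x, ρt 1 x * Real.log (ρt 1 x / ρ 1 x))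
        - ∫ x, ρt 0 x * Real.log (ρt 0 x / ρ 0 x) := by
    refine intervalIntegral.integral_eq_sub_of_hasDerivAt
      (f := fun s => ∫ x, ρt s x * Real.log (ρt s x / ρ s x)) ?_ ?_
    · intro t ht
      rw [hIcc] at ht
      exact hDUI t ht
    · have hII := (hfin₃.sub hfin₂).div_const (2:ℝ)
      apply hII.congr_ae
      refine Filter.eventuallyEq_of_mem (self_mem_ae_restrict measurableSet_uIoc) ?_
      intro t ht
      rw [Set.uIoc_of_le zero_le_one] at ht
      have h2 := key t ⟨ht.1.le, ht.2⟩
      simp only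
      linarith
  have hcong : (∫ t in (0:ℝ)..1, ∫ x,
        (deriv (fun s => ρt s x) t * (1 + Real.log (ρt t x / ρ t x))
          - deriv (fun s => ρ s x) t * (ρt t x / ρ t x)))
      = ((∫ t in (0:ℝ)..1, ∫ x,
          (‖vt t x + gradient (fun y => Real.log (ρt t y / ρ t y)) x‖ ^ 2 * ρt t x
            + ‖v t x - gradient (fun y => ρt t y / ρ t y) x‖ ^ 2 * ρ t x))
        - ∫ t in (0:ℝ)..1, ∫ x,
          (‖vt t x‖ ^ 2 * ρt t x + ‖v t x‖ ^ 2 * ρ t x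
            + ‖gradient (fun y => Real.log (ρt t y / ρ t y)) x‖ ^ 2 * ρt t x
            + ‖gradient (fun y => ρt t y / ρ t y) x‖ ^ 2 * ρ t x)) / 2 := by
    rw [← intervalIntegral.integral_sub hfin₃ hfin₂, ← intervalIntegral.integral_div]
    apply intervalIntegral.integral_congr
    intro t ht
    rw [hIcc] at ht
    have h2 := key t ht
    simp only
    linarith
  rw [hcong] at hFTC
  linarith
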